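/- arXiv:2112.12452 — 6 statements merged into one kernel-verified Lean document; each statement's English description precedes it below -/
import Mathlib

section
/- Let V be a (2s+2)-dimensional F_q-vector space and let R be a collection of q+1 pairwise complementary (s+1)-dimensional subspaces such that every 2-dimensional subspace meeting three members of R nontrivially meets all members of R nontrivially (a regulus). Let σ ∈ R, let r₁, …, r_k be linearly independent vectors of σ (1 ≤ k ≤ s+1), and for each i let t_i be the unique 2-dimensional transversal subspace through r_i (the one meeting every member of R nontrivially). Then T := span(t₁, …, t_k) has dimension 2k and T intersects every member of R in a subspace of dimension exactly k. -/
/-!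
Pick a member `Q` of the regulus other than `σ` and a given member `ρ`. A transversal line
`tᵢ` meets `Q`, so modulo `Q` it collapses to the span of `rᵢ`; hence a nonzero vector of
`tᵢ ∩ ρ` is, modulo `Q`, a nonzero multiple of `rᵢ`. The `rᵢ` stay independent modulo `Q`
because `σ ∩ Q = 0`, so these `k` vectors of `T ∩ ρ` are independent and `dim (T ∩ ρ) ≥ k`.
As `T` is spanned by `k` lines, `dim T ≤ 2k`, while two members of the regulus meet `T` in
subspaces with trivial intersection; this forces both equalities.
-/

open Module Submodule

theorem Finset.exists_mem_ne_ne {α : Type*} {s : Finset α} (hs : 2 < s.card) (a b : α) :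
    ∃ c ∈ s, c ≠ a ∧ c ≠ b := by
  classical
  have h₁ := Finset.pred_card_le_card_erase (s := s) (a := a)
  have h₂ := Finset.pred_card_le_card_erase (s := s.erase a) (a := b)
  obtain ⟨c, hc⟩ := Finset.card_pos.mp (by omega : 0 < ((s.erase a).erase b).card)
  obtain ⟨hcb, hca, hcs⟩ := by simpa using hc
  exact ⟨c, hcs, hca, hcb⟩

section

variable {K V : Type*} [DivisionRing K] [AddCommGroup V] [Module K V]

theorem Submodule.le_span_singleton_sup_of_finrank_eq_two {t Q : Submodule K V} {r : V}
    (ht : finrank K t = 2) (hrt : r ∈ t) (hrQ : r ∉ Q) (htQ : t ⊓ Q ≠ ⊥) : t ≤ (K ∙ r) ⊔ Q := by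
  have : FiniteDimensional K t := Module.finite_of_finrank_eq_succ ht
  have hlt : t ⊓ Q < (K ∙ r) ⊔ (t ⊓ Q) := by
    refine lt_of_le_of_ne le_sup_right fun h => hrQ ?_
    exact inf_le_right (a := t) (h ▸ mem_sup_left (mem_span_singleton_self r))
  have hle : (K ∙ r) ⊔ (t ⊓ Q) ≤ t :=
    sup_le ((span_singleton_le_iff_mem r t).mpr hrt) inf_le_left
  have htQ_pos : 1 ≤ finrank K ↥(t ⊓ Q) := one_le_finrank_iff.mpr htQ
  have heq : (K ∙ r) ⊔ (t ⊓ Q) = t :=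
    eq_of_le_of_finrank_le hle (by have := finrank_lt_finrank_of_lt hlt; omega)
  exact heq ▸ sup_le_sup_left inf_le_right _

theorem LinearIndependent.of_mem_span_singleton_sup {ι : Type*} {r v : ι → V}
    {Q : Submodule K V} (hr : LinearIndependent K r) (hrQ : Disjoint (span K (Set.range r)) Q)
    (hv : ∀ i, v i ∈ (K ∙ r i) ⊔ Q) (hvQ : ∀ i, v i ∉ Q) : LinearIndependent K v := by
  have hcoef : ∀ i, ∃ c : Kˣ, c • Q.mkQ (r i) = Q.mkQ (v i) := by
    intro i
    obtain ⟨y, hy, z, hz, hyz⟩ := mem_sup.mp (hv i)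
    obtain ⟨a, rfl⟩ := mem_span_singleton.mp hy
    have ha : a ≠ 0 := by
      rintro rfl
      exact hvQ i (by simpa [← hyz] using hz)
    refine ⟨Units.mk0 a ha, ?_⟩
    simp [← hyz, (Quotient.mk_eq_zero Q).mpr hz]
  choose c hc using hcoef
  have hπr : LinearIndependent K (Q.mkQ ∘ r) := hr.map (by rwa [ker_mkQ])
  refine LinearIndependent.of_comp Q.mkQ ?_
  convert hπr.units_smul c using 1
  ext i
  exact (hc i).symm

theorem Submodule.finrank_iSup_le_sum {ι : Type*} [Fintype ι] (t : ι → Submodule K V)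
    [∀ i, FiniteDimensional K (t i)] : finrank K ↥(⨆ i, t i) ≤ ∑ i, finrank K (t i) := by
  classical
  rw [← Finset.sup_univ_eq_iSup]
  induction (Finset.univ : Finset ι) using Finset.induction_on with
  | empty => simp
  | insert a s has ih =>
    rw [Finset.sup_insert, Finset.sum_insert has]
    exact (finrank_add_le_finrank_add_finrank _ _).trans (Nat.add_le_add_left ih _)

theorem Submodule.finrank_inf_add_finrank_inf_le {T ρ τ : Submodule K V}
    [FiniteDimensional K T] (h : Disjoint ρ τ) :
    finrank K ↥(T ⊓ ρ) + finrank K ↥(T ⊓ τ) ≤ finrank K T := by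
  have hbot : (T ⊓ ρ) ⊓ (T ⊓ τ) = ⊥ :=
    (h.mono inf_le_right inf_le_right).eq_bot
  rw [← finrank_sup_add_finrank_inf_eq, hbot, finrank_bot, add_zero]
  exact finrank_mono (sup_le inf_le_left inf_le_left)

theorem card_le_finrank_iSup_inf {ι : Type*} [Fintype ι] {t : ι → Submodule K V} {r : ι → V}
    {P Q ρ : Submodule K V} (ht : ∀ i, finrank K (t i) = 2) (hr : LinearIndependent K r)
    (hrP : ∀ i, r i ∈ P) (hrt : ∀ i, r i ∈ t i) (hPQ : Disjoint P Q) (hρQ : Disjoint ρ Q)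
    (htQ : ∀ i, t i ⊓ Q ≠ ⊥) (htρ : ∀ i, t i ⊓ ρ ≠ ⊥) :
    Fintype.card ι ≤ finrank K ↥((⨆ i, t i) ⊓ ρ) := by
  have : ∀ i, FiniteDimensional K (t i) := fun i => Module.finite_of_finrank_eq_succ (ht i)
  choose v hv hv0 using fun i => exists_mem_ne_zero_of_ne_bot (htρ i)
  have hvQ : ∀ i, v i ∉ Q := fun i hQ => hv0 i (disjoint_def.mp hρQ _ (mem_inf.mp (hv i)).2 hQ)
  have hrQ : ∀ i, r i ∉ Q := fun i hQ => hr.ne_zero i (disjoint_def.mp hPQ _ (hrP i) hQ)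
  have hspan : span K (Set.range r) ≤ P := span_le.mpr (Set.range_subset_iff.mpr hrP)
  have hvli : LinearIndependent K v :=
    hr.of_mem_span_singleton_sup (hPQ.mono_left hspan)
      (fun i => le_span_singleton_sup_of_finrank_eq_two (ht i) (hrt i) (hrQ i) (htQ i)
        (mem_inf.mp (hv i)).1) hvQ
  have hvT : ∀ i, v i ∈ (⨆ i, t i) ⊓ ρ := fun i =>
    mem_inf.mpr ⟨mem_iSup_of_mem i (mem_inf.mp (hv i)).1, (mem_inf.mp (hv i)).2⟩
  exact LinearIndependent.fintype_card_le_finrank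
    (b := fun i => (⟨v i, hvT i⟩ : ↥((⨆ i, t i) ⊓ ρ))) (hvli.of_comp ((⨆ i, t i) ⊓ ρ).subtype)

end

theorem stmt_7_general {q k : ℕ} {F V : Type*} [Field F] [Fintype F] (hq : Fintype.card F = q)
    [AddCommGroup V] [Module F V]
    (R : Finset (Submodule F V)) (hR : R.card = q + 1)
    (hdisj : ∀ σ ∈ R, ∀ σ' ∈ R, σ ≠ σ' → σ ⊓ σ' = ⊥)
    (σ : Submodule F V) (hσ : σ ∈ R)
    (r : Fin k → V) (hrσ : ∀ i, r i ∈ σ) (hli : LinearIndependent F r)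
    (tl : Fin k → Submodule F V)
    (htl : ∀ i, finrank F (tl i) = 2)
    (hrtl : ∀ i, r i ∈ tl i)
    (htrans : ∀ i, ∀ σ' ∈ R, finrank F (tl i ⊓ σ' : Submodule F V) = 1) :
    finrank F (⨆ i, tl i : Submodule F V) = 2 * k ∧
      ∀ σ' ∈ R, finrank F ((⨆ i, tl i) ⊓ σ' : Submodule F V) = k := by
  have : ∀ i, FiniteDimensional F (tl i) := fun i => Module.finite_of_finrank_eq_succ (htl i)
  have hR3 : 2 < R.card := by have := Fintype.one_lt_card (α := F); omega
  have hdisjoint : ∀ ρ ∈ R, ∀ τ ∈ R, ρ ≠ τ → Disjoint ρ τ := fun ρ hρ τ hτ h =>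
    disjoint_iff.mpr (hdisj ρ hρ τ hτ h)
  have hmeet : ∀ i, ∀ ρ ∈ R, tl i ⊓ ρ ≠ ⊥ := fun i ρ hρ =>
    one_le_finrank_iff.mp (htrans i ρ hρ).ge
  have hlower : ∀ ρ ∈ R, k ≤ finrank F ↥((⨆ i, tl i) ⊓ ρ) := by
    intro ρ hρ
    obtain ⟨Q, hQ, hQσ, hQρ⟩ := Finset.exists_mem_ne_ne hR3 σ ρ
    simpa using card_le_finrank_iSup_inf htl hli hrσ hrtl (hdisjoint σ hσ Q hQ hQσ.symm)
      (hdisjoint ρ hρ Q hQ hQρ.symm) (fun i => hmeet i Q hQ) (fun i => hmeet i ρ hρ)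
  have hupper : finrank F ↥(⨆ i, tl i) ≤ 2 * k := by
    simpa [htl, mul_comm] using finrank_iSup_le_sum tl
  have hsplit : ∀ ρ ∈ R,
      finrank F ↥((⨆ i, tl i) ⊓ ρ) = k ∧ finrank F ↥(⨆ i, tl i) = 2 * k := by
    intro ρ hρ
    obtain ⟨τ, hτ, hτρ⟩ := R.exists_mem_ne (by omega) ρ
    have := finrank_inf_add_finrank_inf_le (T := ⨆ i, tl i) (hdisjoint ρ hρ τ hτ hτρ.symm)
    have := hlower ρ hρ
    have := hlower τ hτ
    omega
  exact ⟨(hsplit σ hσ).2, fun ρ hρ => (hsplit ρ hρ).1⟩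

/-- Span-of-transversals lemma: given a regulus R in a (2s+2)-dimensional F_q-vector
space, k linearly independent vectors in a member of R with their transversal lines
t₁,…,t_k, the span T of the transversals has dimension 2k and meets every member of R
in a subspace of dimension exactly k. -/
theorem stmt_7 {q s k : ℕ} {F V : Type*} [Field F] [Fintype F] (hq : Fintype.card F = q)
    [AddCommGroup V] [Module F V] [FiniteDimensional F V]
    (hV : finrank F V = 2 * s + 2)
    (R : Finset (Submodule F V)) (hR : R.card = q + 1)
    (hdim : ∀ σ ∈ R, finrank F σ = s + 1)
    (hdisj : ∀ σ ∈ R, ∀ σ' ∈ R, σ ≠ σ' → σ ⊓ σ' = ⊥)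
    (hreg : ∀ L : Submodule F V, finrank F L = 2 →
      (∃ σ₁ ∈ R, ∃ σ₂ ∈ R, ∃ σ₃ ∈ R, σ₁ ≠ σ₂ ∧ σ₁ ≠ σ₃ ∧ σ₂ ≠ σ₃ ∧
        L ⊓ σ₁ ≠ ⊥ ∧ L ⊓ σ₂ ≠ ⊥ ∧ L ⊓ σ₃ ≠ ⊥) →
      ∀ σ ∈ R, L ⊓ σ ≠ ⊥)
    (σ : Submodule F V) (hσ : σ ∈ R)
    (hk1 : 1 ≤ k) (hks : k ≤ s + 1)
    (r : Fin k → V) (hrσ : ∀ i, r i ∈ σ) (hli : LinearIndependent F r)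
    (tl : Fin k → Submodule F V)
    (htl : ∀ i, finrank F (tl i) = 2)
    (hrtl : ∀ i, r i ∈ tl i)
    (htrans : ∀ i, ∀ σ' ∈ R, finrank F (tl i ⊓ σ' : Submodule F V) = 1) :
    finrank F (⨆ i, tl i : Submodule F V) = 2 * k ∧
      ∀ σ' ∈ R, finrank F ((⨆ i, tl i) ⊓ σ' : Submodule F V) = k :=
  stmt_7_general hq R hR hdisj σ hσ r hrσ hli tl htl hrtl htrans
end

section
/- Let V be an F_{q^{s+1}}-vector space of dimension t (t ≥ 1), viewed also as an F_q-vector space of dimension t(s+1). Let C be the set of 1-dimensional F_{q^{s+1}}-subspaces of V spanned by nonzero vectors of the F_q-span of an F_{q^{s+1}}-basis of V (i.e., C is the point set of a (t-1)-dimensional F_q-subgeometry of PG(t-1,q^{s+1})). Then there exists an F_q-subspace χ of V of F_q-dimension st such that for every P ∈ C, the F_q-dimension of χ ∩ P (where P is viewed as an (s+1)-dimensional F_q-subspace) equals exactly s. -/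
/-!
A `K`-basis `b` of `W` is an `L`-basis of `V`. Fix a nonzero `K`-linear functional `φ : L → K` and
let `χ` consist of the vectors all of whose `b`-coordinates lie in `ker φ`; it has codimension `t`.
For `w = ∑ cᵢ bᵢ` with `cᵢ ∈ K` not all zero, the coordinates of `a • w` are `a cᵢ` and
`φ (a cᵢ) = cᵢ φ a`, so `a • w ∈ χ` iff `φ a = 0`. Hence `χ ∩ L w ≅ ker φ`, of dimension `s`.
-/

open Module

namespace Module.Basis

variable {K L V ι : Type*} [Field K] [Field L] [Algebra K L]
  [AddCommGroup V] [Module L V] [Module K V] [IsScalarTower K L V]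

noncomputable def coordFunctional (B : Basis ι L V) (φ : L →ₗ[K] K) : V →ₗ[K] ι → K :=
  LinearMap.pi fun i => φ ∘ₗ (B.coord i).restrictScalars K

@[simp]
lemma coordFunctional_apply (B : Basis ι L V) (φ : L →ₗ[K] K) (v : V) (i : ι) :
    B.coordFunctional φ v i = φ (B.repr v i) :=
  rfl

lemma coordFunctional_surjective [Finite ι] (B : Basis ι L V) {φ : L →ₗ[K] K}
    (hφ : Function.Surjective φ) : Function.Surjective (B.coordFunctional φ) := by
  obtain ⟨a, ha⟩ := hφ 1
  refine fun c => ⟨B.equivFun.symm fun i => c i • a, funext fun i => ?_⟩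
  simp [← B.equivFun_apply, ha]

lemma finrank_ker_coordFunctional_add [Fintype ι] [FiniteDimensional K L] (B : Basis ι L V)
    {φ : L →ₗ[K] K} (hφ : Function.Surjective φ) :
    finrank K (LinearMap.ker (B.coordFunctional φ)) + Fintype.card ι =
      finrank K L * Fintype.card ι := by
  have : FiniteDimensional L V := B.finiteDimensional_of_finite
  have : FiniteDimensional K V := .trans K L V
  have hrank := (B.coordFunctional φ).finrank_range_add_finrank_ker
  rw [LinearMap.range_eq_top.mpr (B.coordFunctional_surjective hφ), finrank_top,
    finrank_fintype_fun_eq_card, ← finrank_mul_finrank K L V, finrank_eq_card_basis B] at hrank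
  omega

lemma coordFunctional_smul_sum [Fintype ι] (B : Basis ι L V) (φ : L →ₗ[K] K) (a : L)
    (c : ι → K) : B.coordFunctional φ (a • ∑ i, c i • B i) = φ a • c := by
  classical
  ext i
  simp [Finset.smul_sum, smul_comm a, ← smul_assoc, Finsupp.single_apply, mul_comm]

lemma finrank_ker_coordFunctional_inf_span_singleton [Fintype ι] (B : Basis ι L V)
    (φ : L →ₗ[K] K) (c : ι → K) (hw : ∑ i, c i • B i ≠ 0) :
    finrank K (LinearMap.ker (B.coordFunctional φ) ⊓
        (Submodule.span L {∑ i, c i • B i}).restrictScalars K : Submodule K V) =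
      finrank K (LinearMap.ker φ) := by
  set w := ∑ i, c i • B i
  let f : L →ₗ[K] V := (LinearMap.toSpanSingleton L V w).restrictScalars K
  have hc : c ≠ 0 := by
    rintro rfl
    simp [w] at hw
  have hcomp : B.coordFunctional φ ∘ₗ f = LinearMap.toSpanSingleton K (ι → K) c ∘ₗ φ := by
    ext a : 1
    exact B.coordFunctional_smul_sum φ a c
  have hinter : LinearMap.ker (B.coordFunctional φ) ⊓
      (Submodule.span L {w}).restrictScalars K = (LinearMap.ker φ).map f := by
    rw [LinearMap.span_singleton_eq_range, ← LinearMap.range_restrictScalars, inf_comm,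
      ← Submodule.map_comap_eq, ← LinearMap.ker_comp, hcomp,
      LinearMap.ker_comp_of_ker_eq_bot _ (LinearMap.ker_toSpanSingleton K hc)]
  rw [hinter]
  exact (Submodule.equivMapOfInjective f (smul_left_injective L hw) _).finrank_eq.symm

end Module.Basis

lemma Submodule.exists_basis_span_eq_of_span_eq_top {K L V : Type*} [Field K] [Field L]
    [Algebra K L] [AddCommGroup V] [Module L V] [Module K V] [IsScalarTower K L V]
    {W : Submodule K V} [Module.Finite K W] {n : ℕ} (hW : finrank K W = n)
    (hV : finrank L V = n) (hspan : span L (W : Set V) = ⊤) :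
    ∃ B : Basis (Fin n) L V, span K (Set.range B) = W := by
  let b := finBasisOfFinrankEq K W hW
  have hb : span K (Set.range (W.subtype ∘ b)) = W := by
    rw [Set.range_comp, ← Submodule.map_span, b.span_eq, Submodule.map_subtype_top]
  refine ⟨basisOfTopLeSpanOfCardEqFinrank (W.subtype ∘ b) ?_ (by simp [hV]), ?_⟩
  · rw [← hspan, ← Submodule.span_span_of_tower K L (Set.range _), hb]
  · rw [coe_basisOfTopLeSpanOfCardEqFinrank, hb]

theorem stmt_10_general {s t : ℕ} {K L V : Type*} [Field K]
    [Field L] [Algebra K L] (hd : finrank K L = s + 1)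
    [AddCommGroup V] [Module L V] [Module K V] [IsScalarTower K L V]
    [FiniteDimensional L V] (hV : finrank L V = t)
    (W : Submodule K V) (hW : finrank K W = t)
    (hWspan : Submodule.span L (W : Set V) = ⊤) :
    ∃ χ : Submodule K V, finrank K χ = s * t ∧
      ∀ w ∈ W, w ≠ 0 →
        finrank K (χ ⊓ (Submodule.span L {w}).restrictScalars K : Submodule K V) = s := by
  have : FiniteDimensional K L := Module.finite_of_finrank_pos (by omega)
  have : FiniteDimensional K V := .trans K L V
  obtain ⟨φ, hφ1⟩ := Projective.exists_dual_eq_one K (one_ne_zero : (1 : L) ≠ 0)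
  have hφ0 : φ ≠ 0 := by
    rintro rfl
    simp at hφ1
  obtain ⟨B, hBW⟩ := W.exists_basis_span_eq_of_span_eq_top hW hV hWspan
  refine ⟨LinearMap.ker (B.coordFunctional φ), ?_, fun w hw hw0 => ?_⟩
  · have hrank := B.finrank_ker_coordFunctional_add (LinearMap.surjective hφ0)
    rw [Fintype.card_fin, hd] at hrank
    linarith
  · obtain ⟨c, rfl⟩ := (Submodule.mem_span_range_iff_exists_fun K).mp (hBW ▸ hw)
    rw [B.finrank_ker_coordFunctional_inf_span_singleton φ c hw0, ← add_left_inj 1,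
      Dual.finrank_ker_add_one_of_ne_zero hφ0, hd]

/-- Key lemma (Lemma 3.4): for the point set of a (t-1)-dimensional F_q-subgeometry of
PG(t-1,q^{s+1}), given by the F_{q^{s+1}}-spans of nonzero vectors of a t-dimensional
F_q-subspace W spanning V over F_{q^{s+1}}, there is an F_q-subspace χ of F_q-dimension
st meeting each field-reduced point in an F_q-subspace of dimension exactly s. -/
theorem stmt_10 {q s t : ℕ} {K L V : Type*} [Field K] [Fintype K] (hq : Fintype.card K = q)
    [Field L] [Algebra K L] (hd : finrank K L = s + 1)
    [AddCommGroup V] [Module L V] [Module K V] [IsScalarTower K L V]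
    [FiniteDimensional L V] (hV : finrank L V = t) (ht : 1 ≤ t)
    (W : Submodule K V) (hW : finrank K W = t)
    (hWspan : Submodule.span L (W : Set V) = ⊤) :
    ∃ χ : Submodule K V, finrank K χ = s * t ∧
      ∀ w ∈ W, w ≠ 0 →
        finrank K (χ ⊓ (Submodule.span L {w}).restrictScalars K : Submodule K V) = s :=
  stmt_10_general hd hV W hW hWspan
end

section
/- Let V be a 2-dimensional F_{q^{s+1}}-vector space and let W be a 2-dimensional F_q-subspace of V with F_{q^{s+1}}-span equal to V (so the F_{q^{s+1}}-lines spanned by nonzero vectors of W form an F_q-subline of PG(1,q^{s+1})). Then the set R of 1-dimensional F_{q^{s+1}}-subspaces spanned by nonzero vectors of W has exactly q+1 elements, and, viewing each element as an (s+1)-dimensional F_q-subspace of the 2(s+1)-dimensional F_q-vector space V, these are pairwise disjoint and form a regulus: every 2-dimensional F_q-subspace of V meeting three members of R nontrivially meets all members of R nontrivially. -/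
/-!
A `K`-basis of `W` is an `L`-basis of `V`, so non-proportional vectors of `W` span distinct
`L`-lines and `w ↦ L ∙ w` identifies the projective line `ℙ K W`, with `q + 1` points, with `R`.
An `L`-line has `K`-dimension `[L : K]`, and distinct lines meet trivially.
If a `K`-plane `M` contains nonzero vectors `lᵢ • wᵢ` of three of the lines, write
`w₃ = γ • w₁ + δ • w₂` in `W` and `l₃ • w₃ = α • l₁ • w₁ + β • l₂ • w₂` in `M`; comparing
coefficients in the `L`-basis `w₁, w₂` puts `l₃ • w₁` and `l₃ • w₂` in `M`. Hence `l₃ • W ≤ M`, and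
`M` meets every line `L ∙ w`, `w ∈ W`, in `l₃ • w`.
-/

open Module Submodule

section DivisionRing

variable {F V : Type*} [DivisionRing F] [AddCommGroup V] [Module F V]

theorem span_singleton_eq_of_mem {v w : V} (hv : v ∈ F ∙ w) (hv0 : v ≠ 0) : (F ∙ v) = F ∙ w := by
  obtain ⟨a, rfl⟩ := mem_span_singleton.mp hv
  exact span_singleton_smul_eq (isUnit_iff_ne_zero.mpr (left_ne_zero_of_smul hv0)) w

theorem linearIndependent_pair_iff_span_singleton_ne {x y : V} (hx : x ≠ 0) (hy : y ≠ 0) :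
    LinearIndependent F ![x, y] ↔ (F ∙ x) ≠ F ∙ y := by
  rw [LinearIndependent.pair_iff' hx]
  constructor
  · intro h hxy
    obtain ⟨a, ha⟩ := mem_span_singleton.mp (hxy ▸ mem_span_singleton_self y)
    exact h a ha
  · rintro h a rfl
    exact h (span_singleton_eq_of_mem (smul_mem _ a (mem_span_singleton_self x)) hy).symm

theorem eq_span_pair_of_linearIndependent {M : Submodule F V} (hM : finrank F M = 2) {x y : V}
    (hx : x ∈ M) (hy : y ∈ M) (hxy : LinearIndependent F ![x, y]) : M = span F {x, y} := by
  have : FiniteDimensional F M := .of_finrank_pos (by omega)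
  refine (eq_of_le_of_finrank_eq (span_le.mpr (Set.insert_subset hx (by simpa using hy))) ?_).symm
  rw [← Matrix.range_cons_cons_empty, finrank_span_eq_card hxy, hM, Fintype.card_fin]

end DivisionRing

section ScalarTower

variable {K L V : Type*} [Field K] [Field L] [Algebra K L]
  [AddCommGroup V] [Module L V] [Module K V] [IsScalarTower K L V]

theorem finrank_restrictScalars_eq_mul (P : Submodule L V) :
    finrank K (P.restrictScalars K) = finrank K L * finrank L P := by
  rw [((restrictScalarsEquiv K L V P).restrictScalars K).finrank_eq, finrank_mul_finrank]

theorem inf_restrictScalars_span_singleton_ne_bot_iff (M : Submodule K V) {w : V} (hw : w ≠ 0) :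
    M ⊓ (L ∙ w).restrictScalars K ≠ ⊥ ↔ ∃ l : L, l ≠ 0 ∧ l • w ∈ M := by
  rw [Submodule.ne_bot_iff]
  constructor
  · rintro ⟨v, hv, hv0⟩
    obtain ⟨hvM, hvw⟩ := mem_inf.mp hv
    obtain ⟨l, rfl⟩ := mem_span_singleton.mp hvw
    exact ⟨l, left_ne_zero_of_smul hv0, hvM⟩
  · rintro ⟨l, hl, hlw⟩
    exact ⟨l • w, mem_inf.mpr ⟨hlw, smul_mem _ l (mem_span_singleton_self w)⟩, smul_ne_zero hl hw⟩

theorem smul_mem_span_pair_of_smul_add_mem {x y : V} (hxy : LinearIndependent L ![x, y])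
    {γ δ : K} (hγ : γ ≠ 0) (hδ : δ ≠ 0) {l₁ l₂ l : L}
    (h : l • (γ • x + δ • y) ∈ span K {l₁ • x, l₂ • y}) :
    l • x ∈ span K {l₁ • x, l₂ • y} ∧ l • y ∈ span K {l₁ • x, l₂ • y} := by
  obtain ⟨α, β, hαβ⟩ := mem_span_pair.mp h
  obtain ⟨h₁, h₂⟩ : α • l₁ = γ • l ∧ β • l₂ = δ • l := hxy.eq_of_pair (by
    rw [smul_assoc, smul_assoc, hαβ, smul_add, smul_comm l γ, smul_comm l δ, smul_assoc,
      smul_assoc])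
  have e₁ : l • x = (γ⁻¹ * α) • l₁ • x := by
    rw [mul_smul, ← smul_assoc α, h₁, smul_assoc, inv_smul_smul₀ hγ]
  have e₂ : l • y = (δ⁻¹ * β) • l₂ • y := by
    rw [mul_smul, ← smul_assoc β, h₂, smul_assoc, inv_smul_smul₀ hδ]
  rw [e₁, e₂]
  exact ⟨smul_mem _ _ (subset_span (by simp)), smul_mem _ _ (subset_span (by simp))⟩

end ScalarTower

section Subline

variable {K L V : Type*} [Field K] [Field L] [AddCommGroup V] [Module L V] [Module K V]

variable (L) in
def spannedLines (W : Submodule K V) : Set (Submodule L V) :=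
  {P | ∃ w ∈ W, w ≠ 0 ∧ P = L ∙ w}

theorem isAtom_of_mem_spannedLines {W : Submodule K V} {P : Submodule L V}
    (hP : P ∈ spannedLines L W) : IsAtom P := by
  obtain ⟨w, -, hw, rfl⟩ := hP
  exact nonzero_span_atom w hw

variable [Algebra K L] [IsScalarTower K L V] {W : Submodule K V}

theorem linearIndependent_pair_of_span_eq_top (hV : finrank L V = 2) (hW : finrank K W = 2)
    (hWspan : span L (W : Set V) = ⊤) {x y : V} (hx : x ∈ W) (hy : y ∈ W)
    (hxy : LinearIndependent K ![x, y]) : LinearIndependent L ![x, y] := by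
  refine linearIndependent_of_top_le_span_of_card_eq_finrank ?_ (by simp [hV])
  rw [Matrix.range_cons_cons_empty, ← span_span_of_tower K,
    ← eq_span_pair_of_linearIndependent hW hx hy hxy, hWspan]

open scoped LinearAlgebra.Projectivization in
theorem card_spannedLines [Finite K] (hV : finrank L V = 2) (hW : finrank K W = 2)
    (hWspan : span L (W : Set V) = ⊤) : Nat.card (spannedLines L W) = Nat.card K + 1 := by
  let f : ℙ K W → Submodule L V := fun p => L ∙ (p.rep : V)
  have hrange : Set.range f = spannedLines L W := by
    ext P
    constructor
    · rintro ⟨p, rfl⟩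
      exact ⟨p.rep, p.rep.2, by simpa using p.rep_nonzero, rfl⟩
    · rintro ⟨w, hwW, hw, rfl⟩
      have hw' : (⟨w, hwW⟩ : W) ≠ 0 := fun h => hw (congrArg Subtype.val h)
      obtain ⟨a, ha⟩ := Projectivization.exists_smul_eq_mk_rep K _ hw'
      refine ⟨Projectivization.mk K _ hw', ?_⟩
      show L ∙ ((Projectivization.mk K _ hw').rep : V) = _
      rw [← ha]
      exact span_singleton_group_smul_eq L a w
  have hinj : Function.Injective f := by
    intro p p' h
    by_contra hne
    have hK :=
      (Projectivization.linearIndependent_pair_iff_ne.mpr hne).map' W.subtype W.ker_subtype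
    rw [← FinVec.map_eq] at hK
    refine (linearIndependent_pair_iff_span_singleton_ne ?_ ?_).mp
      (linearIndependent_pair_of_span_eq_top hV hW hWspan p.rep.2 p'.rep.2 hK) h
    · simpa using p.rep_nonzero
    · simpa using p'.rep_nonzero
  rw [← hrange, Nat.card_range_of_injective hinj, Projectivization.card_of_finrank_two K W hW]

theorem inf_restrictScalars_ne_bot_of_three (hW : finrank K W = 2) {M : Submodule K V}
    (hM : finrank K M = 2) {P₁ P₂ P₃ P : Submodule L V} (hP₁ : P₁ ∈ spannedLines L W)
    (hP₂ : P₂ ∈ spannedLines L W) (hP₃ : P₃ ∈ spannedLines L W) (h₁₂ : P₁ ≠ P₂) (h₁₃ : P₁ ≠ P₃)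
    (h₂₃ : P₂ ≠ P₃) (hM₁ : M ⊓ P₁.restrictScalars K ≠ ⊥) (hM₂ : M ⊓ P₂.restrictScalars K ≠ ⊥)
    (hM₃ : M ⊓ P₃.restrictScalars K ≠ ⊥) (hP : P ∈ spannedLines L W) :
    M ⊓ P.restrictScalars K ≠ ⊥ := by
  obtain ⟨w₁, hw₁W, hw₁, rfl⟩ := hP₁
  obtain ⟨w₂, hw₂W, hw₂, rfl⟩ := hP₂
  obtain ⟨w₃, hw₃W, hw₃, rfl⟩ := hP₃
  obtain ⟨w, hwW, hw, rfl⟩ := hP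
  obtain ⟨l₁, hl₁, hm₁⟩ := (inf_restrictScalars_span_singleton_ne_bot_iff M hw₁).mp hM₁
  obtain ⟨l₂, hl₂, hm₂⟩ := (inf_restrictScalars_span_singleton_ne_bot_iff M hw₂).mp hM₂
  obtain ⟨l₃, hl₃, hm₃⟩ := (inf_restrictScalars_span_singleton_ne_bot_iff M hw₃).mp hM₃
  have hL : LinearIndependent L ![w₁, w₂] :=
    (linearIndependent_pair_iff_span_singleton_ne hw₁ hw₂).mpr h₁₂
  have hW₁₂ : W = span K {w₁, w₂} :=
    eq_span_pair_of_linearIndependent hW hw₁W hw₂W (hL.restrict_scalars' K)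
  have hM₁₂ : M = span K {l₁ • w₁, l₂ • w₂} := by
    refine eq_span_pair_of_linearIndependent hM hm₁ hm₂
      (LinearIndependent.restrict_scalars' (K := L) K ?_)
    rwa [linearIndependent_pair_iff_span_singleton_ne (smul_ne_zero hl₁ hw₁)
      (smul_ne_zero hl₂ hw₂), span_singleton_smul_eq hl₁.isUnit, span_singleton_smul_eq hl₂.isUnit]
  subst hM₁₂
  obtain ⟨γ, δ, rfl⟩ := mem_span_pair.mp (hW₁₂ ▸ hw₃W)
  have hγ : γ ≠ 0 := by
    rintro rfl
    rw [zero_smul, zero_add] at hw₃ h₂₃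
    exact h₂₃ (span_singleton_group_smul_eq L (Units.mk0 δ (left_ne_zero_of_smul hw₃)) w₂).symm
  have hδ : δ ≠ 0 := by
    rintro rfl
    rw [zero_smul, add_zero] at hw₃ h₁₃
    exact h₁₃ (span_singleton_group_smul_eq L (Units.mk0 γ (left_ne_zero_of_smul hw₃)) w₁).symm
  obtain ⟨hx, hy⟩ := smul_mem_span_pair_of_smul_add_mem hL hγ hδ hm₃
  refine (inf_restrictScalars_span_singleton_ne_bot_iff _ hw).mpr ⟨l₃, hl₃, ?_⟩
  obtain ⟨e, f, rfl⟩ := mem_span_pair.mp (hW₁₂ ▸ hwW)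
  rw [smul_add, smul_comm l₃ e, smul_comm l₃ f]
  exact add_mem (smul_mem _ e hx) (smul_mem _ f hy)

end Subline

theorem stmt_11_general {q s : ℕ} {K L V : Type*} [Field K] [Fintype K] (hq : Fintype.card K = q)
    [Field L] [Algebra K L] (hd : finrank K L = s + 1)
    [AddCommGroup V] [Module L V] [Module K V] [IsScalarTower K L V]
    (hV : finrank L V = 2)
    (W : Submodule K V) (hW : finrank K W = 2)
    (hWspan : Submodule.span L (W : Set V) = ⊤)
    (R : Set (Submodule L V))
    (hRdef : R = {P | ∃ w ∈ W, w ≠ 0 ∧ P = Submodule.span L {w}}) :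
    Nat.card R = q + 1 ∧
    (∀ P ∈ R, finrank K (Submodule.restrictScalars K P) = s + 1) ∧
    (∀ P₁ ∈ R, ∀ P₂ ∈ R, P₁ ≠ P₂ →
      Submodule.restrictScalars K P₁ ⊓ Submodule.restrictScalars K P₂ = ⊥) ∧
    (∀ M : Submodule K V, finrank K M = 2 →
      (∃ P₁ ∈ R, ∃ P₂ ∈ R, ∃ P₃ ∈ R, P₁ ≠ P₂ ∧ P₁ ≠ P₃ ∧ P₂ ≠ P₃ ∧
        M ⊓ Submodule.restrictScalars K P₁ ≠ ⊥ ∧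
        M ⊓ Submodule.restrictScalars K P₂ ≠ ⊥ ∧
        M ⊓ Submodule.restrictScalars K P₃ ≠ ⊥) →
      ∀ P ∈ R, M ⊓ Submodule.restrictScalars K P ≠ ⊥) := by
  change R = spannedLines L W at hRdef
  subst hRdef
  refine ⟨?_, ?_, ?_, ?_⟩
  · rw [← hq, ← Nat.card_eq_fintype_card]
    exact card_spannedLines hV hW hWspan
  · rintro P ⟨w, -, hw, rfl⟩
    rw [finrank_restrictScalars_eq_mul, finrank_span_singleton hw, hd, mul_one]
  · intro P₁ hP₁ P₂ hP₂ hne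
    rw [← restrictScalars_inf, ((isAtom_of_mem_spannedLines hP₁).disjoint_of_ne
      (isAtom_of_mem_spannedLines hP₂) hne).eq_bot, restrictScalars_bot]
  · rintro M hM ⟨P₁, hP₁, P₂, hP₂, P₃, hP₃, h₁₂, h₁₃, h₂₃, hM₁, hM₂, hM₃⟩ P hP
    exact inf_restrictScalars_ne_bot_of_three hW hM hP₁ hP₂ hP₃ h₁₂ h₁₃ h₂₃ hM₁ hM₂ hM₃ hP

/-- Field reduction maps an F_q-subline of PG(1,q^{s+1}) to a regulus of PG(2s+1,q):
the set R of F_{q^{s+1}}-lines spanned by nonzero vectors of a 2-dimensional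
F_q-subspace W spanning V has q+1 elements, its members (restricted to F_q) are pairwise
disjoint (s+1)-dimensional F_q-subspaces, and every 2-dimensional F_q-subspace meeting
three members of R nontrivially meets all members of R nontrivially. -/
theorem stmt_11 {q s : ℕ} {K L V : Type*} [Field K] [Fintype K] (hq : Fintype.card K = q)
    [Field L] [Algebra K L] (hd : finrank K L = s + 1)
    [AddCommGroup V] [Module L V] [Module K V] [IsScalarTower K L V]
    [FiniteDimensional L V] (hV : finrank L V = 2)
    (W : Submodule K V) (hW : finrank K W = 2)
    (hWspan : Submodule.span L (W : Set V) = ⊤)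
    (R : Set (Submodule L V))
    (hRdef : R = {P | ∃ w ∈ W, w ≠ 0 ∧ P = Submodule.span L {w}}) :
    Nat.card R = q + 1 ∧
    (∀ P ∈ R, finrank K (Submodule.restrictScalars K P) = s + 1) ∧
    (∀ P₁ ∈ R, ∀ P₂ ∈ R, P₁ ≠ P₂ →
      Submodule.restrictScalars K P₁ ⊓ Submodule.restrictScalars K P₂ = ⊥) ∧
    (∀ M : Submodule K V, finrank K M = 2 →
      (∃ P₁ ∈ R, ∃ P₂ ∈ R, ∃ P₃ ∈ R, P₁ ≠ P₂ ∧ P₁ ≠ P₃ ∧ P₂ ≠ P₃ ∧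
        M ⊓ Submodule.restrictScalars K P₁ ≠ ⊥ ∧
        M ⊓ Submodule.restrictScalars K P₂ ≠ ⊥ ∧
        M ⊓ Submodule.restrictScalars K P₃ ≠ ⊥) →
      ∀ P ∈ R, M ⊓ Submodule.restrictScalars K P ≠ ⊥) :=
  stmt_11_general hq hd hV W hW hWspan R hRdef
end

section
/- Let V be a finite-dimensional F_q-vector space of dimension n with a nondegenerate bilinear form, and for a subspace U let U^⊥ denote its orthogonal complement. Let Σ and χ be subspaces with χ ⊆ Σ, dim Σ = st+t, dim χ = st, where n = st+s+t+1. Then Σ^⊥ ⊆ χ^⊥, dim Σ^⊥ = s+1, dim χ^⊥ = s+t+1. Moreover, for any (s+1)-dimensional subspace P with P ∩ Σ = {0}: dim(P^⊥ ∩ χ^⊥) = t and (P^⊥ ∩ χ^⊥) ∩ Σ^⊥ = {0}. -/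
/-!
Nondegeneracy of `B` gives `dim W^⊥ = n - dim W`, and `W ↦ W^⊥` turns sums into intersections.
If `P ∩ Σ = 0`, then also `P ∩ χ = 0`, and counting dimensions gives `P + Σ = V`. Hence
`P^⊥ ∩ χ^⊥ = (P + χ)^⊥` has dimension `n - (s + 1) - st = t`, while
`P^⊥ ∩ χ^⊥ ∩ Σ^⊥ = (P + Σ)^⊥ = V^⊥ = 0`.
-/

open Module

namespace LinearMap.BilinForm

section CommRing

variable {R M : Type*} [CommRing R] [AddCommGroup M] [Module R M] {B : LinearMap.BilinForm R M}

theorem orthogonal_sup (W₁ W₂ : Submodule R M) :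
    B.orthogonal (W₁ ⊔ W₂) = B.orthogonal W₁ ⊓ B.orthogonal W₂ := by
  refine le_antisymm (le_inf (B.orthogonal_le le_sup_left) (B.orthogonal_le le_sup_right)) ?_
  rintro x ⟨h₁, h₂⟩ _ hw
  obtain ⟨a, ha, b, hb, rfl⟩ := Submodule.mem_sup.mp hw
  simp [h₁ a ha, h₂ b hb]

theorem orthogonal_inf_orthogonal_eq_bot_of_sup_eq_top (hB : B.Nondegenerate)
    {W₁ W₂ : Submodule R M} (h : W₁ ⊔ W₂ = ⊤) :
    B.orthogonal W₁ ⊓ B.orthogonal W₂ = ⊥ := by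
  rw [← orthogonal_sup, h, orthogonal_top_eq_bot hB]

end CommRing

variable {K V : Type*} [Field K] [AddCommGroup V] [Module K V] [FiniteDimensional K V]
  {B : LinearMap.BilinForm K V}

theorem finrank_orthogonal_inf_orthogonal_of_disjoint (hB : B.Nondegenerate)
    {W₁ W₂ : Submodule K V} (h : Disjoint W₁ W₂) :
    finrank K ↥(B.orthogonal W₁ ⊓ B.orthogonal W₂) + finrank K W₁ + finrank K W₂ =
      finrank K V := by
  have hsup := Submodule.finrank_sup_add_finrank_inf_eq W₁ W₂
  rw [h.eq_bot, finrank_bot, add_zero] at hsup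
  rw [← orthogonal_sup, finrank_orthogonal hB]
  have := Submodule.finrank_le (W₁ ⊔ W₂)
  omega

end LinearMap.BilinForm

theorem stmt_15_general {s t n : ℕ} {F V : Type*} [Field F]
    [AddCommGroup V] [Module F V] [FiniteDimensional F V]
    (hn : n = s * t + s + t + 1) (hV : finrank F V = n)
    (B : LinearMap.BilinForm F V) (hB : B.Nondegenerate)
    (Sig χ : Submodule F V) (hsub : χ ≤ Sig)
    (hSig : finrank F Sig = s * t + t) (hχ : finrank F χ = s * t) :
    B.orthogonal Sig ≤ B.orthogonal χ ∧
    finrank F (B.orthogonal Sig) = s + 1 ∧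
    finrank F (B.orthogonal χ) = s + t + 1 ∧
    ∀ P : Submodule F V, finrank F P = s + 1 → P ⊓ Sig = ⊥ →
      finrank F (B.orthogonal P ⊓ B.orthogonal χ : Submodule F V) = t ∧
      (B.orthogonal P ⊓ B.orthogonal χ) ⊓ B.orthogonal Sig = ⊥ := by
  have hle : B.orthogonal Sig ≤ B.orthogonal χ := B.orthogonal_le hsub
  refine ⟨hle, ?_, ?_, fun P hP hPSig => ⟨?_, ?_⟩⟩
  · rw [B.finrank_orthogonal hB, hV, hSig, hn]
    omega
  · rw [B.finrank_orthogonal hB, hV, hχ, hn]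
    omega
  · have hPχ : Disjoint P χ := (disjoint_iff.mpr hPSig).mono_right hsub
    have := B.finrank_orthogonal_inf_orthogonal_of_disjoint hB hPχ
    rw [hP, hχ, hV, hn] at this
    omega
  · have hPSig_top : P ⊔ Sig = ⊤ :=
      Submodule.eq_top_of_disjoint P Sig (by rw [hP, hSig, hV, hn]; omega)
        (disjoint_iff.mpr hPSig)
    rw [inf_assoc, inf_eq_right.mpr hle]
    exact B.orthogonal_inf_orthogonal_eq_bot_of_sup_eq_top hB hPSig_top

/-- Duality via orthogonal complements: with n = st+s+t+1, χ ⊆ Σ of dimensions st and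
st+t, we have Σ^⊥ ⊆ χ^⊥ with dim Σ^⊥ = s+1 and dim χ^⊥ = s+t+1, and for every
(s+1)-dimensional subspace P disjoint from Σ, the space P^⊥ ∩ χ^⊥ has dimension t and
is disjoint from Σ^⊥. -/
theorem stmt_15 {q s t n : ℕ} {F V : Type*} [Field F] [Fintype F] (hq : Fintype.card F = q)
    [AddCommGroup V] [Module F V] [FiniteDimensional F V]
    (hn : n = s * t + s + t + 1) (hV : finrank F V = n)
    (B : LinearMap.BilinForm F V) (hB : B.Nondegenerate)
    (Sig χ : Submodule F V) (hsub : χ ≤ Sig)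
    (hSig : finrank F Sig = s * t + t) (hχ : finrank F χ = s * t) :
    B.orthogonal Sig ≤ B.orthogonal χ ∧
    finrank F (B.orthogonal Sig) = s + 1 ∧
    finrank F (B.orthogonal χ) = s + t + 1 ∧
    ∀ P : Submodule F V, finrank F P = s + 1 → P ⊓ Sig = ⊥ →
      finrank F (B.orthogonal P ⊓ B.orthogonal χ : Submodule F V) = t ∧
      (B.orthogonal P ⊓ B.orthogonal χ) ⊓ B.orthogonal Sig = ⊥ :=
  stmt_15_general hn hV B hB Sig χ hsub hSig hχ
end

section
/- Let V be an (st+s+t+1)-dimensional F_q-vector space with nondegenerate bilinear form, Σ of dimension st+t, χ ⊆ Σ of dimension st. Suppose P₁, P₂ are (s+1)-dimensional subspaces each trivially intersecting Σ, with P₁ ∩ P₂ = {0}, and let Q := span(P₁,P₂) ∩ Σ. Assume dim Q = s+1 and dim(χ ∩ Q) = s. Then dim(P₁^⊥ ∩ χ^⊥ ∩ P₂^⊥ ∩ χ^⊥) = dim(P₁^⊥ ∩ P₂^⊥ ∩ χ^⊥) = t - 1. -/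
/-!
With `Ψ = P₁ ⊔ P₂`, both subspaces in question are the orthogonal complement of `Ψ ⊔ χ`.
Since `χ ≤ Σ`, `Ψ ⊓ χ = χ ⊓ Q` has dimension `s`, so Grassmann's formula gives
`dim (Ψ ⊔ χ) = (2s + 2) + st - s = st + s + 2`, whose complement in `V` has dimension `t - 1`.
-/

open Module LinearMap

namespace LinearMap.BilinForm

lemma orthogonal_sup_s17 {R M : Type*} [CommSemiring R] [AddCommMonoid M] [Module R M]
    (B : LinearMap.BilinForm R M) (N L : Submodule R M) :
    B.orthogonal (N ⊔ L) = B.orthogonal N ⊓ B.orthogonal L := by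
  refine le_antisymm (le_inf (orthogonal_le le_sup_left) (orthogonal_le le_sup_right)) ?_
  rintro x ⟨hN, hL⟩ y hy
  obtain ⟨n, hn, l, hl, rfl⟩ := Submodule.mem_sup.1 hy
  rw [map_add, LinearMap.add_apply, hN n hn, hL l hl, add_zero]

end LinearMap.BilinForm

theorem stmt_17_general {s t : ℕ} {F V : Type*} [Field F]
    [AddCommGroup V] [Module F V] [FiniteDimensional F V]
    (hV : finrank F V = s * t + s + t + 1)
    (B : LinearMap.BilinForm F V) (hB : B.Nondegenerate)
    (Sig χ : Submodule F V) (hsub : χ ≤ Sig)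
    (hχ : finrank F χ = s * t)
    (P₁ P₂ Q : Submodule F V)
    (h₁ : finrank F P₁ = s + 1) (h₂ : finrank F P₂ = s + 1)
    (h₁₂ : P₁ ⊓ P₂ = ⊥)
    (hQ : Q = (P₁ ⊔ P₂) ⊓ Sig)
    (hχQ : finrank F (χ ⊓ Q : Submodule F V) = s) :
    finrank F ((B.orthogonal P₁ ⊓ B.orthogonal χ) ⊓ (B.orthogonal P₂ ⊓ B.orthogonal χ) :
        Submodule F V) = t - 1 ∧
    finrank F (B.orthogonal P₁ ⊓ B.orthogonal P₂ ⊓ B.orthogonal χ : Submodule F V)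
      = t - 1 := by
  have hΨ : finrank F (P₁ ⊔ P₂ : Submodule F V) = 2 * s + 2 := by
    have := Submodule.finrank_sup_add_finrank_inf_eq P₁ P₂
    rw [h₁₂, finrank_bot] at this
    omega
  have hΨχ : (P₁ ⊔ P₂) ⊓ χ = χ ⊓ Q := by
    rw [hQ, inf_comm χ, inf_assoc, inf_eq_right.2 hsub]
  have hspan : finrank F (P₁ ⊔ P₂ ⊔ χ : Submodule F V) = s * t + s + 2 := by
    have := Submodule.finrank_sup_add_finrank_inf_eq (P₁ ⊔ P₂) χ
    rw [hΨχ, hχQ, hΨ, hχ] at this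
    omega
  have key : finrank F (B.orthogonal P₁ ⊓ B.orthogonal P₂ ⊓ B.orthogonal χ : Submodule F V)
      = t - 1 := by
    rw [← BilinForm.orthogonal_sup_s17, ← BilinForm.orthogonal_sup_s17,
      BilinForm.finrank_orthogonal hB, hspan, hV]
    omega
  exact ⟨by rwa [← inf_inf_distrib_right], key⟩

/-- Core computation of Claim 2: images of two affine points on a common line of
Y(s,t,q) intersect in dimension t-1. -/
theorem stmt_17 {q s t : ℕ} {F V : Type*} [Field F] [Fintype F] (hq : Fintype.card F = q)
    [AddCommGroup V] [Module F V] [FiniteDimensional F V]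
    (hV : finrank F V = s * t + s + t + 1)
    (B : LinearMap.BilinForm F V) (hB : B.Nondegenerate)
    (Sig χ : Submodule F V) (hsub : χ ≤ Sig)
    (hSig : finrank F Sig = s * t + t) (hχ : finrank F χ = s * t)
    (P₁ P₂ Q : Submodule F V)
    (h₁ : finrank F P₁ = s + 1) (h₂ : finrank F P₂ = s + 1)
    (hd₁ : P₁ ⊓ Sig = ⊥) (hd₂ : P₂ ⊓ Sig = ⊥) (h₁₂ : P₁ ⊓ P₂ = ⊥)
    (hQ : Q = (P₁ ⊔ P₂) ⊓ Sig)
    (hQdim : finrank F Q = s + 1)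
    (hχQ : finrank F (χ ⊓ Q : Submodule F V) = s) :
    finrank F ((B.orthogonal P₁ ⊓ B.orthogonal χ) ⊓ (B.orthogonal P₂ ⊓ B.orthogonal χ) :
        Submodule F V) = t - 1 ∧
    finrank F (B.orthogonal P₁ ⊓ B.orthogonal P₂ ⊓ B.orthogonal χ : Submodule F V)
      = t - 1 :=
  stmt_17_general hV B hB Sig χ hsub hχ P₁ P₂ Q h₁ h₂ h₁₂ hQ hχQ
end

section
/- Let V be an (s+t+1)-dimensional F_q-vector space, π an (s+1)-dimensional subspace, and S a family of t-dimensional subspaces each disjoint from π, such that any two distinct members of S intersect in a (t-1)-dimensional subspace, and such that the members of S do not all contain a common (t-1)-dimensional subspace. Then all members of S are contained in a common (t+1)-dimensional subspace, and this subspace meets π in a 1-dimensional subspace. -/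
/-!
Two distinct members `A`, `B` of the family span a `(t+1)`-space `A ⊔ B`. A third member `C`
meets `A` and `B` in hyperplanes of `C`: if these coincide they equal `A ⊓ B`, so `A ⊓ B ≤ C`;
otherwise they span `C`, so `C ≤ A ⊔ B`. Since no `(t-1)`-space is common to the family, some `C`
misses `A ⊓ B`, and then every member lies in `A ⊔ B`. Finally `A ⊔ B` meets `π` by Grassmann's
identity, and in dimension at most one because its hyperplane `A` is disjoint from `π`.
-/

open Module

namespace Submodule

variable {F V : Type*} [Field F] [AddCommGroup V] [Module F V]

theorem exists_le_finrank_eq (A : Submodule F V) {k : ℕ} (hk : k ≤ finrank F A) :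
    ∃ W ≤ A, finrank F W = k := by
  obtain ⟨f, hf⟩ := exists_linearIndependent_of_le_finrank (R := F) (M := A) hk
  refine ⟨span F (Set.range (A.subtype ∘ f)), ?_, ?_⟩
  · rw [span_le]
    rintro _ ⟨i, rfl⟩
    exact (f i).2
  · rw [finrank_span_eq_card (hf.map' A.subtype A.ker_subtype), Fintype.card_fin]

variable [FiniteDimensional F V]

theorem sup_eq_of_finrank_eq_succ {X Y D : Submodule F V} {n : ℕ} (hX : X ≤ D) (hY : Y ≤ D)
    (hXr : finrank F X = n) (hYr : finrank F Y = n) (hD : finrank F D = n + 1) (hne : X ≠ Y) :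
    X ⊔ Y = D := by
  have hlt : X < X ⊔ Y := by
    refine lt_of_le_of_ne le_sup_left fun h => hne ?_
    exact (eq_of_le_of_finrank_le (h ▸ le_sup_right : Y ≤ X) (by omega)).symm
  have := finrank_lt_finrank_of_lt hlt
  exact eq_of_le_of_finrank_le (sup_le hX hY) (by omega)

theorem inf_le_or_le_sup {A B C : Submodule F V} {n : ℕ} (hC : finrank F C = n + 1)
    (hAB : finrank F (A ⊓ B : Submodule F V) = n) (hCA : finrank F (C ⊓ A : Submodule F V) = n)
    (hCB : finrank F (C ⊓ B : Submodule F V) = n) : A ⊓ B ≤ C ∨ C ≤ A ⊔ B := by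
  by_cases h : C ⊓ A = C ⊓ B
  · left
    have hCA_eq : C ⊓ A = A ⊓ B :=
      eq_of_le_of_finrank_le (le_inf inf_le_right (h ▸ inf_le_right)) (by omega)
    exact hCA_eq ▸ inf_le_left
  · right
    rw [← sup_eq_of_finrank_eq_succ inf_le_left inf_le_left hCA hCB hC h]
    exact sup_le_sup inf_le_right inf_le_right

theorem forall_inf_le_or_forall_le_sup {S : Set (Submodule F V)} {n : ℕ}
    (hdim : ∀ τ ∈ S, finrank F τ = n + 1)
    (hpair : S.Pairwise fun τ₁ τ₂ => finrank F (τ₁ ⊓ τ₂ : Submodule F V) = n)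
    {A B : Submodule F V} (hA : A ∈ S) (hB : B ∈ S) (hAB : A ≠ B) :
    (∀ τ ∈ S, A ⊓ B ≤ τ) ∨ ∀ τ ∈ S, τ ≤ A ⊔ B := by
  rw [or_iff_not_imp_left, not_forall₂]
  rintro ⟨C, hC, hABC⟩ D hD
  have hCA : C ≠ A := fun h => hABC (h ▸ inf_le_left)
  have hCB : C ≠ B := fun h => hABC (h ▸ inf_le_right)
  have hC_le : C ≤ A ⊔ B :=
    (inf_le_or_le_sup (hdim C hC) (hpair hA hB hAB) (hpair hC hA hCA) (hpair hC hB hCB)).resolve_left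
      hABC
  obtain rfl | hDA := eq_or_ne D A
  · exact le_sup_left
  obtain rfl | hDB := eq_or_ne D B
  · exact le_sup_right
  rcases inf_le_or_le_sup (hdim D hD) (hpair hA hB hAB) (hpair hD hA hDA) (hpair hD hB hDB) with
    hABD | hD_le
  · have hDC : D ≠ C := fun h => hABC (h ▸ hABD)
    -- `A ⊓ B` and `D ⊓ C` are distinct hyperplanes of `D`, so they span it.
    have hne : A ⊓ B ≠ D ⊓ C := fun h => hABC (h ▸ inf_le_right)
    rw [← sup_eq_of_finrank_eq_succ hABD inf_le_left (hpair hA hB hAB) (hpair hD hC hDC)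
      (hdim D hD) hne]
    exact sup_le inf_le_sup (inf_le_right.trans hC_le)
  · exact hD_le

theorem finrank_inf_eq_one_of_inf_eq_bot {A M π : Submodule F V} (hAM : A ≤ M)
    (hM : finrank F M = finrank F A + 1) (hAπ : A ⊓ π = ⊥)
    (hMπ : finrank F V < finrank F M + finrank F π) :
    finrank F (M ⊓ π : Submodule F V) = 1 := by
  have hgrass := finrank_sup_add_finrank_inf_eq M π
  have := finrank_le (M ⊔ π)
  have hdisj : A ⊓ (M ⊓ π) = ⊥ := by rw [← inf_assoc, inf_eq_left.mpr hAM, hAπ]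
  have hgrass' := finrank_sup_add_finrank_inf_eq A (M ⊓ π)
  have := finrank_mono (sup_le hAM inf_le_left : A ⊔ (M ⊓ π) ≤ M)
  rw [hdisj, finrank_bot] at hgrass'
  omega

end Submodule

open Submodule in
theorem stmt_18_general {s t : ℕ} {F V : Type*} [Field F]
    [AddCommGroup V] [Module F V] [FiniteDimensional F V]
    (hV : finrank F V = s + t + 1)
    (π : Submodule F V) (hπ : finrank F π = s + 1)
    (S : Set (Submodule F V))
    (hdim : ∀ τ ∈ S, finrank F τ = t)
    (hdisj : ∀ τ ∈ S, τ ⊓ π = ⊥)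
    (hpair : ∀ τ₁ ∈ S, ∀ τ₂ ∈ S, τ₁ ≠ τ₂ →
      finrank F (τ₁ ⊓ τ₂ : Submodule F V) = t - 1)
    (hnocommon : ¬ ∃ W : Submodule F V, finrank F W = t - 1 ∧ ∀ τ ∈ S, W ≤ τ) :
    ∃ M : Submodule F V, finrank F M = t + 1 ∧ (∀ τ ∈ S, τ ≤ M) ∧
      finrank F (M ⊓ π : Submodule F V) = 1 := by
  obtain ⟨A, hA, B, hB, hAB⟩ : ∃ A ∈ S, ∃ B ∈ S, A ≠ B := by
    by_contra! hsub
    rcases S.eq_empty_or_nonempty with rfl | ⟨A, hA⟩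
    · obtain ⟨W, -, hW⟩ := (⊤ : Submodule F V).exists_le_finrank_eq (k := t - 1)
        (by rw [finrank_top]; omega)
      exact hnocommon ⟨W, hW, by simp⟩
    · obtain ⟨W, hWA, hW⟩ := A.exists_le_finrank_eq (k := t - 1) (by rw [hdim A hA]; omega)
      exact hnocommon ⟨W, hW, fun τ hτ => hsub A hA τ hτ ▸ hWA⟩
  obtain ⟨n, rfl⟩ : ∃ n, t = n + 1 := Nat.exists_eq_add_one_of_ne_zero fun ht =>
    hAB <| (finrank_eq_zero.mp (ht ▸ hdim A hA)).trans (finrank_eq_zero.mp (ht ▸ hdim B hB)).symm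
  simp only [Nat.add_sub_cancel] at hpair hnocommon
  have hsup : finrank F (A ⊔ B : Submodule F V) = n + 2 := by
    have := finrank_sup_add_finrank_inf_eq A B
    rw [hdim A hA, hdim B hB, hpair A hA B hB hAB] at this
    omega
  rcases forall_inf_le_or_forall_le_sup hdim hpair hA hB hAB with hcommon | hM
  · exact absurd ⟨A ⊓ B, hpair A hA B hB hAB, hcommon⟩ hnocommon
  refine ⟨A ⊔ B, hsup, hM, finrank_inf_eq_one_of_inf_eq_bot le_sup_left ?_ (hdisj A hA) ?_⟩
  · rw [hsup, hdim A hA]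
  · rw [hV, hsup, hπ]
    omega

/-- Erdős–Ko–Rado-type conclusion: a family of t-dimensional subspaces disjoint from π,
pairwise intersecting in dimension t-1, with no common (t-1)-dimensional subspace, lies
in a common (t+1)-dimensional subspace meeting π in a 1-dimensional subspace. -/
theorem stmt_18 {q s t : ℕ} {F V : Type*} [Field F] [Fintype F] (hq : Fintype.card F = q)
    [AddCommGroup V] [Module F V] [FiniteDimensional F V]
    (hV : finrank F V = s + t + 1)
    (π : Submodule F V) (hπ : finrank F π = s + 1)
    (S : Set (Submodule F V))
    (hdim : ∀ τ ∈ S, finrank F τ = t)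
    (hdisj : ∀ τ ∈ S, τ ⊓ π = ⊥)
    (hpair : ∀ τ₁ ∈ S, ∀ τ₂ ∈ S, τ₁ ≠ τ₂ →
      finrank F (τ₁ ⊓ τ₂ : Submodule F V) = t - 1)
    (hnocommon : ¬ ∃ W : Submodule F V, finrank F W = t - 1 ∧ ∀ τ ∈ S, W ≤ τ) :
    ∃ M : Submodule F V, finrank F M = t + 1 ∧ (∀ τ ∈ S, τ ≤ M) ∧
      finrank F (M ⊓ π : Submodule F V) = 1 :=
  stmt_18_general hV π hπ S hdim hdisj hpair hnocommon
end
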